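/- Let e be the absolute ramification index of F and let L be a field containing F complete with respect to a valuation extending v_p. Suppose 0 < s ≤ r < 1/((q−1)·e), and let f = ∑_{n≥0} a_n·u^n ∈ L[[u]] satisfy v_p(a_n) + n·qs → +∞ as n → ∞ (so f converges on the disc of valuation-radius qs). Then v^{[s,r]}(φ_q(f)) = v^{[qs,qr]}(f), where φ_q(f)(u) = f(u^q + π·u). -/

import Mathlib

noncomputable def pscomp {L : Type*} [CommRing L] (f s : PowerSeries L) : PowerSeries L :=
  PowerSeries.mk fun n =>
    ∑ m ∈ Finset.range (n + 1), PowerSeries.coeff m f * PowerSeries.coeff n (s ^ m)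

noncomputable def phiqPS {L : Type*} [CommRing L] (q : ℕ) (π : L) (f : PowerSeries L) :
    PowerSeries L :=
  pscomp f (PowerSeries.X ^ q + PowerSeries.C π * PowerSeries.X)

/-!
Write `φ_q f = ∑ₘ aₘ (u^q + πu)^m`. The `u^n`-coefficient of `(u^q + πu)^m` is a sum of terms
`π^j · C(m, k)` with `m = k + j` and `n = qk + j`; since `(q - 1)t ≤ v(π)`, each has valuation at
least `j(q - 1)t = mqt - nt`, whence `v^{t}(φ_q f) ≥ v^{qt}(f)`.

Conversely, the terms `v(aₘ) + mqt` tend to `+∞`, so there is a largest index `m₀` at which they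
attain their infimum. In the `u^{qm₀}`-coefficient of `φ_q f` the contribution of `a_{m₀}` is
`a_{m₀}` itself (`(u^q + πu)^{m₀}` is monic of degree `qm₀`) and it strictly dominates: smaller `m`
contribute nothing for degree reasons, larger `m` have strictly larger valuation by the estimate
above and the maximality of `m₀`. Hence `v^{t}(φ_q f) = v^{qt}(f)` for every `t ∈ [s, r]`, and the
substitution `t ↦ qt` identifies the two infima.
-/

open PowerSeries Finset

structure IsERealAddValuation {L : Type*} [Ring L] (v : L → EReal) : Prop where
  map_zero : v 0 = ⊤
  map_one : v 1 = 0
  map_mul : ∀ x y, v (x * y) = v x + v y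
  min_le_map_add : ∀ x y, min (v x) (v y) ≤ v (x + y)

namespace IsERealAddValuation

variable {L : Type*} [Ring L] {v : L → EReal}

theorem natCast_nonneg (hv : IsERealAddValuation v) (n : ℕ) : 0 ≤ v n := by
  induction n with
  | zero => simp [hv.map_zero]
  | succ n ih =>
    push_cast
    exact (le_min ih hv.map_one.ge).trans (hv.min_le_map_add _ _)

theorem map_neg_one (hv : IsERealAddValuation v) : v (-1) = 0 := by
  have h : v (-1) + v (-1) = 0 := by rw [← hv.map_mul, neg_one_mul, neg_neg, hv.map_one]
  generalize v (-1) = w at h ⊢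
  induction w with
  | bot => simp at h
  | top => simp at h
  | coe a =>
    have h : a + a = 0 := by exact_mod_cast h
    exact_mod_cast (by linarith : a = 0)

theorem map_neg (hv : IsERealAddValuation v) (x : L) : v (-x) = v x := by
  rw [← neg_one_mul, hv.map_mul, hv.map_neg_one, zero_add]

theorem map_add_eq_of_lt (hv : IsERealAddValuation v) {x y : L} (h : v x < v y) :
    v (x + y) = v x := by
  refine le_antisymm ?_ (min_eq_left h.le ▸ hv.min_le_map_add x y)
  by_contra! hlt
  have := hv.min_le_map_add (x + y) (-y)
  rw [add_neg_cancel_right, hv.map_neg] at this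
  exact (lt_min hlt h).not_ge this

theorem exists_le_map_sum (hv : IsERealAddValuation v) {ι : Type*} {s : Finset ι}
    (hs : s.Nonempty) (x : ι → L) : ∃ i ∈ s, v (x i) ≤ v (∑ i ∈ s, x i) := by
  induction hs using Finset.Nonempty.cons_induction with
  | singleton i => exact ⟨i, mem_singleton_self i, by rw [sum_singleton]⟩
  | cons a s ha _ ih =>
    obtain ⟨i, hi, hle⟩ := ih
    rw [sum_cons]
    rcases le_total (v (x a)) (v (∑ i ∈ s, x i)) with h | h
    · exact ⟨a, mem_cons_self a s, (min_eq_left h).symm.le.trans (hv.min_le_map_add _ _)⟩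
    · exact ⟨i, mem_cons.2 (Or.inr hi),
        hle.trans ((min_eq_right h).symm.le.trans (hv.min_le_map_add _ _))⟩

theorem lt_map_sum (hv : IsERealAddValuation v) {ι : Type*} {s : Finset ι} (hs : s.Nonempty)
    {x : ι → L} {B : EReal} (h : ∀ i ∈ s, B < v (x i)) : B < v (∑ i ∈ s, x i) := by
  obtain ⟨i, hi, hle⟩ := hv.exists_le_map_sum hs x
  exact (h i hi).trans_le hle

theorem map_sum_eq_of_lt (hv : IsERealAddValuation v) {ι : Type*} [DecidableEq ι]
    {s : Finset ι} {x : ι → L} {i₀ : ι} (hi₀ : i₀ ∈ s)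
    (h : ∀ i ∈ s, i ≠ i₀ → v (x i₀) < v (x i)) : v (∑ i ∈ s, x i) = v (x i₀) := by
  rw [← add_sum_erase s x hi₀]
  rcases (s.erase i₀).eq_empty_or_nonempty with he | hne
  · rw [he, sum_empty, add_zero]
  · exact hv.map_add_eq_of_lt <| hv.lt_map_sum hne fun i hi =>
      h i (mem_of_mem_erase hi) (ne_of_mem_erase hi)

theorem le_map_pow (hv : IsERealAddValuation v) {x : L} {c : ℝ} (h : (c : EReal) ≤ v x)
    (j : ℕ) : ((j * c : ℝ) : EReal) ≤ v (x ^ j) := by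
  induction j with
  | zero => simp [hv.map_one]
  | succ j ih =>
    rw [pow_succ, hv.map_mul, Nat.cast_succ, add_one_mul, EReal.coe_add]
    exact add_le_add ih h

end IsERealAddValuation

theorem exists_greatest_argmin {x : ℕ → EReal} (hx : ∀ M : ℝ, ∃ N, ∀ n ≥ N, (M : EReal) ≤ x n)
    (hfin : ∃ n, x n ≠ ⊤) : ∃ m, (∀ n, x m ≤ x n) ∧ ∀ n, m < n → x m < x n := by
  classical
  obtain ⟨n₁, hn₁⟩ := hfin
  obtain ⟨M, hM, -⟩ := EReal.exists_between_coe_real (lt_top_iff_ne_top.2 hn₁)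
  obtain ⟨N, hN⟩ := hx M
  have hlarge : ∀ n ≥ N, x n₁ < x n := fun n hn => hM.trans_le (hN n hn)
  have hn₁N : n₁ < N := not_le.1 fun h => (hlarge n₁ h).false
  obtain ⟨m, hmN, hm⟩ := (range N).exists_min_image x ⟨n₁, mem_range.2 hn₁N⟩
  have hmin : ∀ n, x m ≤ x n := fun n => (lt_or_ge n N).elim (fun h => hm n (mem_range.2 h))
    fun h => (hm n₁ (mem_range.2 hn₁N)).trans (hlarge n h).le
  let P n := ∀ k, x n ≤ x k
  have hP : P (Nat.findGreatest P N) := Nat.findGreatest_spec (mem_range.1 hmN).le hmin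
  refine ⟨Nat.findGreatest P N, hP, fun n hn => (hP n).lt_of_ne fun h => ?_⟩
  rcases le_or_gt n N with hnN | hnN
  · exact Nat.findGreatest_is_greatest hn hnN fun k => h ▸ hP k
  · exact (hlarge n hnN.le).not_ge (h ▸ hP n₁)

theorem iInf_Icc_comp_mul_left {α : Type*} [CompleteLattice α] (g : ℝ → α) {c : ℝ} (hc : 0 < c)
    (a b : ℝ) : ⨅ t : Set.Icc a b, g (c * t) = ⨅ t : Set.Icc (c * a) (c * b), g t := by
  rw [← Set.image_mul_left_Icc' hc, iInf_subtype'', iInf_image,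
    iInf_subtype'' (Set.Icc a b) (fun t => g (c * t))]

section PhiQ

variable {L : Type*} [CommRing L]

noncomputable def phiqPoly (q : ℕ) (π : L) : Polynomial L :=
  Polynomial.X ^ q + Polynomial.C π * Polynomial.X

theorem coeff_phiqPS (q : ℕ) (π : L) (f : PowerSeries L) (n : ℕ) :
    coeff n (phiqPS q π f) = ∑ m ∈ range (n + 1), coeff m f * (phiqPoly q π ^ m).coeff n := by
  simp [phiqPS, pscomp, phiqPoly, ← Polynomial.coeff_coe]

theorem coeff_phiqPoly_pow (q : ℕ) (π : L) (m n : ℕ) :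
    (phiqPoly q π ^ m).coeff n =
      ∑ k ∈ range (m + 1), if n = q * k + (m - k) then π ^ (m - k) * m.choose k else 0 := by
  rw [phiqPoly, add_pow, Polynomial.finsetSum_coeff]
  refine sum_congr rfl fun k _ => ?_
  rw [show (Polynomial.X ^ q) ^ k * (Polynomial.C π * Polynomial.X) ^ (m - k) *
        (m.choose k : Polynomial L) =
      Polynomial.C (π ^ (m - k) * m.choose k) * Polynomial.X ^ (q * k + (m - k)) by
    rw [map_mul, map_pow, map_natCast]; ring, Polynomial.coeff_C_mul_X_pow]

theorem IsERealAddValuation.le_map_coeff_phiqPoly_pow {v : L → EReal}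
    (hv : IsERealAddValuation v) {q : ℕ} {π : L} {t : ℝ}
    (hπ : ((((q : ℝ) - 1) * t : ℝ) : EReal) ≤ v π) (m n : ℕ) :
    ((m * (q * t) : ℝ) : EReal) ≤ v ((phiqPoly q π ^ m).coeff n) + ((n * t : ℝ) : EReal) := by
  rw [coeff_phiqPoly_pow]
  obtain ⟨k, hk, hle⟩ := hv.exists_le_map_sum nonempty_range_add_one
    fun k => if n = q * k + (m - k) then π ^ (m - k) * (m.choose k : L) else 0
  refine le_trans ?_ (add_le_add hle le_rfl)
  split_ifs with hn
  · have hkm : k ≤ m := Nat.lt_succ_iff.1 (mem_range.1 hk)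
    have hterm : (((m - k : ℕ) * (((q : ℝ) - 1) * t) : ℝ) : EReal) ≤
        v (π ^ (m - k) * m.choose k) := by
      rw [hv.map_mul, ← add_zero ((_ : ℝ) : EReal)]
      exact add_le_add (hv.le_map_pow hπ _) (hv.natCast_nonneg _)
    refine le_of_eq_of_le ?_ (add_le_add hterm le_rfl)
    rw [← EReal.coe_add, hn, EReal.coe_eq_coe_iff]
    push_cast [hkm]
    ring
  · rw [hv.map_zero, EReal.top_add_coe]
    exact le_top

variable {q : ℕ}

theorem monic_phiqPoly (hq : 2 ≤ q) (π : L) : (phiqPoly q π).Monic :=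
  Polynomial.monic_X_pow_add <| (Polynomial.degree_C_mul_X_le π).trans_lt (by exact_mod_cast hq)

variable [Nontrivial L]

theorem natDegree_phiqPoly (hq : 2 ≤ q) (π : L) : (phiqPoly q π).natDegree = q := by
  have hdeg :
      (Polynomial.C π * Polynomial.X).degree < (Polynomial.X ^ q : Polynomial L).degree := by
    rw [Polynomial.degree_X_pow]
    exact (Polynomial.degree_C_mul_X_le π).trans_lt (by exact_mod_cast hq)
  rw [phiqPoly, Polynomial.natDegree_add_eq_left_of_degree_lt hdeg, Polynomial.natDegree_X_pow]

theorem coeff_phiqPoly_pow_eq_zero_of_lt (hq : 2 ≤ q) (π : L) {m n : ℕ} (hn : q * m < n) :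
    (phiqPoly q π ^ m).coeff n = 0 := by
  refine Polynomial.coeff_eq_zero_of_natDegree_lt ?_
  rwa [(monic_phiqPoly hq π).natDegree_pow, natDegree_phiqPoly hq, mul_comm]

theorem coeff_phiqPoly_pow_eq_one (hq : 2 ≤ q) (π : L) (m : ℕ) :
    (phiqPoly q π ^ m).coeff (q * m) = 1 := by
  have := ((monic_phiqPoly hq π).pow m).coeff_natDegree
  rwa [(monic_phiqPoly hq π).natDegree_pow, natDegree_phiqPoly hq, mul_comm] at this

end PhiQ

/-- `gaussVal v t f` is `v^{t}(f)`. -/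
noncomputable def gaussVal {L : Type*} [Semiring L] (v : L → EReal) (t : ℝ) (f : PowerSeries L) :
    EReal :=
  ⨅ n : ℕ, v (coeff n f) + ((n * t : ℝ) : EReal)

section GaussVal

variable {L : Type*} [CommRing L] {v : L → EReal} {q : ℕ} {π : L} {t : ℝ}

theorem gaussVal_le_gaussVal_phiqPS (hv : IsERealAddValuation v)
    (hπ : ((((q : ℝ) - 1) * t : ℝ) : EReal) ≤ v π) (f : PowerSeries L) :
    gaussVal v (q * t) f ≤ gaussVal v t (phiqPS q π f) := by
  refine le_iInf fun n => ?_
  rw [coeff_phiqPS]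
  obtain ⟨m, -, hle⟩ := hv.exists_le_map_sum nonempty_range_add_one
    fun m => coeff m f * (phiqPoly q π ^ m).coeff n
  calc gaussVal v (q * t) f ≤ v (coeff m f) + ((m * (q * t) : ℝ) : EReal) := iInf_le _ m
    _ ≤ v (coeff m f) + (v ((phiqPoly q π ^ m).coeff n) + ((n * t : ℝ) : EReal)) :=
      add_le_add le_rfl (hv.le_map_coeff_phiqPoly_pow hπ m n)
    _ ≤ _ := by rw [← add_assoc, ← hv.map_mul]; exact add_le_add hle le_rfl

theorem gaussVal_phiqPS_le [Nontrivial L] (hv : IsERealAddValuation v) (hq : 2 ≤ q)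
    (hπ : ((((q : ℝ) - 1) * t : ℝ) : EReal) ≤ v π) {f : PowerSeries L}
    (hf : ∀ M : ℝ, ∃ N, ∀ n ≥ N, (M : EReal) ≤ v (coeff n f) + ((n * (q * t) : ℝ) : EReal)) :
    gaussVal v t (phiqPS q π f) ≤ gaussVal v (q * t) f := by
  set x : ℕ → EReal := fun n => v (coeff n f) + ((n * (q * t) : ℝ) : EReal)
  by_cases htop : ∀ n, x n = ⊤
  · exact le_top.trans_eq (iInf_eq_top.2 htop).symm
  push Not at htop
  obtain ⟨m₀, hmin, hlt⟩ := exists_greatest_argmin hf htop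
  have hshift : (((q * m₀ : ℕ) : ℝ) * t : ℝ) = m₀ * (q * t) := by push_cast; ring
  have hlead : v (coeff m₀ f * (phiqPoly q π ^ m₀).coeff (q * m₀)) = v (coeff m₀ f) := by
    rw [coeff_phiqPoly_pow_eq_one hq, mul_one]
  have hfin : v (coeff m₀ f) ≠ ⊤ := by
    obtain ⟨n, hn⟩ := htop
    have hxm₀ : x m₀ ≠ ⊤ := ne_top_of_le_ne_top hn (hmin n)
    exact fun h => hxm₀ (by simp only [x, h, EReal.top_add_coe])
  have hdom : v (coeff (q * m₀) (phiqPS q π f)) = v (coeff m₀ f) := by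
    rw [coeff_phiqPS, hv.map_sum_eq_of_lt (i₀ := m₀), hlead]
    · exact mem_range.2 (Nat.lt_succ_of_le (Nat.le_mul_of_pos_left m₀ (by omega)))
    intro m _ hne
    rw [hlead]
    rcases lt_or_gt_of_ne hne with h | h
    · rw [coeff_phiqPoly_pow_eq_zero_of_lt hq π (Nat.mul_lt_mul_of_pos_left h (by omega)),
        mul_zero, hv.map_zero]
      exact lt_top_iff_ne_top.2 hfin
    · refine lt_of_not_ge fun hge => (hlt m h).not_ge ?_
      calc x m ≤ v (coeff m f) + (v ((phiqPoly q π ^ m).coeff (q * m₀)) + _) :=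
            add_le_add le_rfl (hv.le_map_coeff_phiqPoly_pow hπ m (q * m₀))
        _ = v (coeff m f * (phiqPoly q π ^ m).coeff (q * m₀)) + ((m₀ * (q * t) : ℝ) : EReal) := by
          rw [hv.map_mul, add_assoc, hshift]
        _ ≤ x m₀ := add_le_add hge le_rfl
  calc gaussVal v t (phiqPS q π f)
        ≤ v (coeff (q * m₀) (phiqPS q π f)) + (((q * m₀ : ℕ) : ℝ) * t : ℝ) := iInf_le _ _
    _ = x m₀ := by rw [hdom, hshift]
    _ ≤ gaussVal v (q * t) f := le_iInf hmin

theorem gaussVal_phiqPS [Nontrivial L] (hv : IsERealAddValuation v) (hq : 2 ≤ q)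
    (hπ : ((((q : ℝ) - 1) * t : ℝ) : EReal) ≤ v π) {f : PowerSeries L}
    (hf : ∀ M : ℝ, ∃ N, ∀ n ≥ N, (M : EReal) ≤ v (coeff n f) + ((n * (q * t) : ℝ) : EReal)) :
    gaussVal v t (phiqPS q π f) = gaussVal v (q * t) f :=
  le_antisymm (gaussVal_phiqPS_le hv hq hπ hf) (gaussVal_le_gaussVal_phiqPS hv hπ f)

end GaussVal

theorem stmt_17_general
    (L : Type*) [Field L]
    (v : L → EReal)
    (hv0 : v 0 = ⊤) (hv1 : v 1 = 0)
    (hvmul : ∀ x y : L, v (x * y) = v x + v y)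
    (hvadd : ∀ x y : L, min (v x) (v y) ≤ v (x + y))
    (π : L) (q e : ℕ) (hq : 2 ≤ q)
    (hπ : v π = ((1 / (e : ℝ) : ℝ) : EReal))
    (s r : ℝ) (hr : r < 1 / (((q : ℝ) - 1) * (e : ℝ)))
    (f : PowerSeries L)
    (hconv : ∀ M : ℝ, ∃ N : ℕ, ∀ n ≥ N,
      (M : EReal) ≤ v (PowerSeries.coeff n f) + (((n : ℝ) * ((q : ℝ) * s) : ℝ) : EReal)) :
    (⨅ t : Set.Icc s r, ⨅ n : ℕ,
        (v (PowerSeries.coeff n (phiqPS q π f)) + (((n : ℝ) * (t : ℝ) : ℝ) : EReal)))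
      = ⨅ t : Set.Icc ((q : ℝ) * s) ((q : ℝ) * r), ⨅ n : ℕ,
          (v (PowerSeries.coeff n f) + (((n : ℝ) * (t : ℝ) : ℝ) : EReal)) := by
  have hv : IsERealAddValuation v := ⟨hv0, hv1, hvmul, hvadd⟩
  have hq1 : (0 : ℝ) < q - 1 := sub_pos.2 (Nat.one_lt_cast.2 hq)
  have hqr : ((q : ℝ) - 1) * r < 1 / e := by
    rw [mul_comm, ← div_div, lt_div_iff₀ hq1] at hr
    linarith
  have hπt (t : ℝ) (ht : t ≤ r) : ((((q : ℝ) - 1) * t : ℝ) : EReal) ≤ v π :=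
    hπ ▸ EReal.coe_le_coe_iff.2 ((mul_le_mul_of_nonneg_left ht hq1.le).trans hqr.le)
  have hconvt (t : ℝ) (ht : s ≤ t) (M : ℝ) :
      ∃ N : ℕ, ∀ n ≥ N, (M : EReal) ≤ v (coeff n f) + ((n * (q * t) : ℝ) : EReal) :=
    (hconv M).imp fun N hN n hn =>
      (hN n hn).trans (add_le_add le_rfl (EReal.coe_le_coe_iff.2 (by gcongr)))
  calc _ = ⨅ t : Set.Icc s r, gaussVal v (q * t) f :=
        iInf_congr fun t => gaussVal_phiqPS hv hq (hπt t t.2.2) (hconvt t t.2.1)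
    _ = _ := iInf_Icc_comp_mul_left (fun t => gaussVal v t f) (by linarith) s r

/-- Let `L` be a field (containing `F`) with valuation `v` extending `v_p`
(`v π = 1/e`, `q` the residue cardinality, `e` the absolute ramification index).  Suppose
`0 < s ≤ r < 1/((q-1)e)` and let `f = ∑ a_n u^n ∈ L[[u]]` satisfy
`v a_n + n (q s) → ∞` (convergence on the disc of valuation-radius `q s`).  Then
`v^{[s,r]}(φ_q f) = v^{[qs,qr]}(f)`. -/
theorem stmt_17
    (L : Type*) [Field L]
    (v : L → EReal)
    (hv0 : v 0 = ⊤) (hv1 : v 1 = 0)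
    (hvmul : ∀ x y : L, v (x * y) = v x + v y)
    (hvadd : ∀ x y : L, min (v x) (v y) ≤ v (x + y))
    (π : L) (q e : ℕ) (hq : 2 ≤ q) (he : 0 < e)
    (hπ : v π = ((1 / (e : ℝ) : ℝ) : EReal))
    (s r : ℝ) (hs : 0 < s) (hsr : s ≤ r) (hr : r < 1 / (((q : ℝ) - 1) * (e : ℝ)))
    (f : PowerSeries L)
    (hconv : ∀ M : ℝ, ∃ N : ℕ, ∀ n ≥ N,
      (M : EReal) ≤ v (PowerSeries.coeff n f) + (((n : ℝ) * ((q : ℝ) * s) : ℝ) : EReal)) :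
    (⨅ t : Set.Icc s r, ⨅ n : ℕ,
        (v (PowerSeries.coeff n (phiqPS q π f)) + (((n : ℝ) * (t : ℝ) : ℝ) : EReal)))
      = ⨅ t : Set.Icc ((q : ℝ) * s) ((q : ℝ) * r), ⨅ n : ℕ,
          (v (PowerSeries.coeff n f) + (((n : ℝ) * (t : ℝ) : ℝ) : EReal)) :=
  stmt_17_general L v hv0 hv1 hvmul hvadd π q e hq hπ s r hr f hconv
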